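/- arXiv:2102.06327 — 2 statements merged into one kernel-verified Lean document; each statement's English description precedes it below -/
import Mathlib

section
/- Let ḡ be a finite-dimensional real Lie algebra equipped with an inner product ⟨·,·⟩. Suppose ḡ is the direct sum of two Lie ideals q₀ and g₁ with q₀ ∩ g₁ = 0, where g₁ is perfect, i.e. ⁅g₁, g₁⁆ = g₁. Let n₀ be a one-dimensional ideal of ḡ with n₀ ⊆ q₀ and ⁅q₀, q₀⁆ ⊆ n₀. If the orthogonal complement u = n₀^⊥ of n₀ in ḡ is a Lie subalgebra of ḡ, then g₁ ⊆ u; in particular, g₁ is orthogonal to n₀. -/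
open Module

/-- Let `ḡ` be a finite-dimensional real Lie algebra with an inner product `B` (a symmetric
positive-definite bilinear form).  Suppose `ḡ = q₀ ⊕ g₁` is a direct sum of Lie ideals with
`g₁` perfect, and `n₀ ⊆ q₀` is a one-dimensional ideal of `ḡ` with `⁅q₀, q₀⁆ ⊆ n₀`.
If the orthogonal complement `u = n₀ᗮ` of `n₀` in `ḡ` is closed under the bracket, then
`g₁ ⊆ u`; in particular `g₁` is orthogonal to `n₀`. -/
theorem perfect_ideal_le_orthogonal_of_nilradical
    (G : Type*) [LieRing G] [LieAlgebra ℝ G] [FiniteDimensional ℝ G]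
    (B : LinearMap.BilinForm ℝ G) (hBsymm : B.IsSymm)
    (hBpos : ∀ x : G, x ≠ 0 → 0 < B x x)
    (q₀ g₁ n₀ : LieIdeal ℝ G)
    (hinf : q₀ ⊓ g₁ = ⊥) (hsup : q₀ ⊔ g₁ = ⊤)
    (hperf : ⁅g₁, g₁⁆ = g₁)
    (hdim : Module.finrank ℝ n₀ = 1)
    (hn₀q₀ : n₀ ≤ q₀)
    (hq₀der : ⁅q₀, q₀⁆ ≤ n₀)
    (hu : ∀ x y : G, x ∈ B.orthogonal (n₀ : Submodule ℝ G) →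
      y ∈ B.orthogonal (n₀ : Submodule ℝ G) → ⁅x, y⁆ ∈ B.orthogonal (n₀ : Submodule ℝ G)) :
    (g₁ : Submodule ℝ G) ≤ B.orthogonal (n₀ : Submodule ℝ G) := by
  classical
  -- pick a nonzero spanning vector `e` of `n₀`
  have hnt : Nontrivial n₀ := Module.nontrivial_of_finrank_pos (R := ℝ) (by omega)
  obtain ⟨⟨e, he⟩, hene⟩ := exists_ne (0 : n₀)
  have he0 : e ≠ 0 := by
    intro h; apply hene; ext; simpa using h
  have hspan : (n₀ : Submodule ℝ G) = Submodule.span ℝ {e} := by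
    refine (Submodule.eq_of_le_of_finrank_eq ?_ ?_).symm
    · rw [Submodule.span_le, Set.singleton_subset_iff]; exact he
    · rw [finrank_span_singleton he0]; exact hdim.symm
  have hBee : B e e ≠ 0 := ne_of_gt (hBpos e he0)
  -- `n₀` centralizes `g₁`
  have hcent : ∀ x ∈ g₁, ∀ n ∈ n₀, ⁅x, (n : G)⁆ = 0 := by
    intro x hx n hn
    have h1 : ⁅x, n⁆ ∈ g₁ := by
      have : ⁅n, x⁆ ∈ g₁ := g₁.lie_mem hx
      rw [← lie_skew] at this
      simpa using g₁.neg_mem this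
    have h2 : ⁅x, n⁆ ∈ n₀ := n₀.lie_mem hn
    have h3 : ⁅x, n⁆ ∈ q₀ ⊓ g₁ := ⟨hn₀q₀ h2, h1⟩
    rw [hinf] at h3
    simpa using h3
  -- the orthogonal projection away from `e` lands in the orthogonal complement
  have hproj : ∀ x : G, x - (B e x / B e e) • e ∈ B.orthogonal (n₀ : Submodule ℝ G) := by
    intro x
    rw [LinearMap.BilinForm.mem_orthogonal_iff]
    intro n hn
    rw [hspan, Submodule.mem_span_singleton] at hn
    obtain ⟨a, rfl⟩ := hn
    show B (a • e) (x - (B e x / B e e) • e) = 0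
    rw [map_smul]
    simp only [map_sub, map_smul, LinearMap.smul_apply, smul_eq_mul]
    field_simp
    ring
  -- brackets of elements of `g₁` lie in the orthogonal complement
  have hbrkt : ∀ x ∈ g₁, ∀ y ∈ g₁, ⁅x, y⁆ ∈ B.orthogonal (n₀ : Submodule ℝ G) := by
    intro x hx y hy
    set c : ℝ := B e x / B e e with hc
    set d : ℝ := B e y / B e e with hd
    have hxe : ⁅x, e⁆ = 0 := hcent x hx e he
    have hye : ⁅y, e⁆ = 0 := hcent y hy e he
    have key : ⁅x, y⁆ = ⁅x - c • e, y - d • e⁆ := by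
      rw [lie_sub, sub_lie, sub_lie, lie_smul, lie_smul, smul_lie, smul_lie, smul_smul,
        hxe, lie_self, ← lie_skew e y, hye]
      simp
    rw [key]
    exact hu _ _ (hproj x) (hproj y)
  -- conclude using perfectness of `g₁`
  intro z hz
  have hz' : z ∈ (⁅g₁, g₁⁆ : LieIdeal ℝ G) := by rw [hperf]; exact hz
  rw [← LieSubmodule.mem_toSubmodule, LieSubmodule.lieIdeal_oper_eq_linear_span'] at hz'
  refine Submodule.span_le.mpr ?_ hz'
  rintro m ⟨x, hx, y, hy, rfl⟩
  exact hbrkt x hx y hy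
end

section
/- Let s(u(2)⊕u(2)) denote the real Lie algebra of block-diagonal matrices {diag(A, B) : A, B ∈ M₂(ℂ), Aᴴ = −A, Bᴴ = −B, tr(A) + tr(B) = 0}, with bracket the matrix commutator (a real Lie algebra of dimension 7), and let su(2)⊕su(2) denote its subalgebra {diag(A, B) : Aᴴ = −A, Bᴴ = −B, tr(A) = 0, tr(B) = 0}. Then the only Lie subalgebra of s(u(2)⊕u(2)) of real dimension 6 (i.e. of codimension 1) is su(2)⊕su(2). -/
open Matrix Module

attribute [local instance 100] LieRing.ofAssociativeRing

/-- `s(u(2)⊕u(2))`: pairs `(A, B)` of skew-Hermitian complex 2×2 matrices with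
`tr A + tr B = 0`, i.e. block-diagonal matrices `diag(A, B)` in `su(4)`; a real Lie
subalgebra (of dimension 7) of `M₂(ℂ) × M₂(ℂ)` with the componentwise commutator bracket. -/
noncomputable def su2u2 :
    LieSubalgebra ℝ (Matrix (Fin 2) (Fin 2) ℂ × Matrix (Fin 2) (Fin 2) ℂ) where
  carrier := {p | p.1ᴴ = -p.1 ∧ p.2ᴴ = -p.2 ∧ p.1.trace + p.2.trace = 0}
  add_mem' := by
    rintro p q ⟨hp1, hp2, hp3⟩ ⟨hq1, hq2, hq3⟩
    refine ⟨?_, ?_, ?_⟩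
    · rw [Prod.fst_add, conjTranspose_add, hp1, hq1, neg_add]
    · rw [Prod.snd_add, conjTranspose_add, hp2, hq2, neg_add]
    · rw [Prod.fst_add, Prod.snd_add, trace_add, trace_add]
      linear_combination hp3 + hq3
  zero_mem' := by
    refine ⟨?_, ?_, ?_⟩ <;> simp
  smul_mem' := by
    rintro r p ⟨hp1, hp2, hp3⟩
    refine ⟨?_, ?_, ?_⟩
    · rw [Prod.smul_fst, conjTranspose_smul, star_trivial, hp1, smul_neg]
    · rw [Prod.smul_snd, conjTranspose_smul, star_trivial, hp2, smul_neg]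
    · rw [Prod.smul_fst, Prod.smul_snd, trace_smul, trace_smul, ← smul_add, hp3, smul_zero]
  lie_mem' := by
    rintro p q ⟨hp1, hp2, hp3⟩ ⟨hq1, hq2, hq3⟩
    refine ⟨?_, ?_, ?_⟩
    · show (⁅p, q⁆.1)ᴴ = -⁅p, q⁆.1
      rw [Ring.lie_def, Prod.fst_sub, Prod.fst_mul, Prod.fst_mul,
        conjTranspose_sub, conjTranspose_mul, conjTranspose_mul, hp1, hq1]
      simp [mul_comm]
    · show (⁅p, q⁆.2)ᴴ = -⁅p, q⁆.2
      rw [Ring.lie_def, Prod.snd_sub, Prod.snd_mul, Prod.snd_mul,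
        conjTranspose_sub, conjTranspose_mul, conjTranspose_mul, hp2, hq2]
      simp [mul_comm]
    · show (⁅p, q⁆.1).trace + (⁅p, q⁆.2).trace = 0
      rw [Ring.lie_def, Prod.fst_sub, Prod.snd_sub, Prod.fst_mul, Prod.fst_mul,
        Prod.snd_mul, Prod.snd_mul, trace_sub, trace_sub,
        trace_mul_comm p.1 q.1, trace_mul_comm p.2 q.2]
      ring

/-- `su(2) ⊕ su(2)`: the Lie subalgebra of `s(u(2)⊕u(2))` of pairs with both traces zero. -/
noncomputable def su2su2 : LieSubalgebra ℝ su2u2 where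
  carrier := {p | (p : Matrix (Fin 2) (Fin 2) ℂ × Matrix (Fin 2) (Fin 2) ℂ).1.trace = 0 ∧
    (p : Matrix (Fin 2) (Fin 2) ℂ × Matrix (Fin 2) (Fin 2) ℂ).2.trace = 0}
  add_mem' := by
    rintro p q ⟨hp1, hp2⟩ ⟨hq1, hq2⟩
    constructor
    · rw [Submodule.coe_add, Prod.fst_add, trace_add, hp1, hq1, add_zero]
    · rw [Submodule.coe_add, Prod.snd_add, trace_add, hp2, hq2, add_zero]
  zero_mem' := by constructor <;> simp
  smul_mem' := by
    rintro r p ⟨hp1, hp2⟩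
    constructor
    · rw [Submodule.coe_smul, Prod.smul_fst, trace_smul, hp1, smul_zero]
    · rw [Submodule.coe_smul, Prod.smul_snd, trace_smul, hp2, smul_zero]
  lie_mem' := by
    rintro p q ⟨hp1, hp2⟩ ⟨hq1, hq2⟩
    constructor
    · rw [LieSubalgebra.coe_bracket, Ring.lie_def, Prod.fst_sub, Prod.fst_mul, Prod.fst_mul,
        trace_sub, trace_mul_comm, sub_self]
    · rw [LieSubalgebra.coe_bracket, Ring.lie_def, Prod.snd_sub, Prod.snd_mul, Prod.snd_mul,
        trace_sub, trace_mul_comm, sub_self]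

/-!
`su(2) ⊕ su(2)` has dimension `6` and is the kernel of the functional `p ↦ Im (tr p.1)`, so
`s(u(2)⊕u(2))` has dimension at most `7`. A subalgebra `s` of dimension `6` therefore meets each
`su(2)` factor, which is `(ℝ³, ×)` with the bracket doubled, in a subspace of dimension at least
`2` closed under the cross product. Such a subspace is all of `ℝ³`: for independent `u, v` the
triple `u × v, u, v` has determinant `‖u × v‖² ≠ 0`. Hence `s` contains `su(2) ⊕ su(2)`, and the
two have the same dimension.
-/

section CrossProduct

variable {K : Type*} [Field K] [LinearOrder K] [IsStrictOrderedRing K]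

theorem linearIndependent_cross_cons {u v : Fin 3 → K} (h : LinearIndependent K ![u, v]) :
    LinearIndependent K ![u ⨯₃ v, u, v] := by
  apply linearIndependent_rows_of_det_ne_zero
  rw [← triple_product_eq_det, Ne, dotProduct_self_eq_zero]
  exact crossProduct_ne_zero_iff_linearIndependent.mpr h

theorem Submodule.eq_top_of_cross_mem {W : Submodule K (Fin 3 → K)} (hW : 2 ≤ finrank K W)
    (hcross : ∀ u ∈ W, ∀ v ∈ W, u ⨯₃ v ∈ W) : W = ⊤ := by
  obtain ⟨f, hf⟩ := exists_linearIndependent_of_le_finrank hW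
  have huv : LinearIndependent K ![(f 0 : Fin 3 → K), f 1] := by
    have hfam : ![(f 0 : Fin 3 → K), f 1] = W.subtype ∘ f := by ext i : 1; fin_cases i <;> rfl
    exact hfam ▸ hf.map' W.subtype W.ker_subtype
  have hspan := (linearIndependent_cross_cons huv).span_eq_top_of_card_eq_finrank (by simp)
  rw [eq_top_iff, ← hspan, Submodule.span_le, Set.range_subset_iff]
  intro i
  fin_cases i
  exacts [hcross _ (f 0).2 _ (f 1).2, (f 0).2, (f 1).2]

end CrossProduct

theorem Submodule.finrank_add_finrank_le_finrank_comap_add {K V W : Type*} [Field K]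
    [AddCommGroup V] [Module K V] [AddCommGroup W] [Module K W] [FiniteDimensional K V]
    [FiniteDimensional K W] (f : V →ₗ[K] W) (p : Submodule K W) :
    finrank K V + finrank K p ≤ finrank K (p.comap f) + finrank K W := by
  have hker : LinearMap.ker (p.mkQ ∘ₗ f) = p.comap f := by
    rw [LinearMap.ker_comp, Submodule.ker_mkQ]
  have hrange := Submodule.finrank_le (LinearMap.range (p.mkQ ∘ₗ f))
  have hsum := LinearMap.finrank_range_add_finrank_ker (p.mkQ ∘ₗ f)
  rw [hker] at hsum
  have hquot := p.finrank_quotient_add_finrank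
  omega

theorem LieSubalgebra.range_le_of_finrank_le_succ {K L : Type*} [Field K] [LinearOrder K]
    [IsStrictOrderedRing K] [LieRing L] [LieAlgebra K L] [FiniteDimensional K L]
    (s : LieSubalgebra K L) (hs : finrank K L ≤ finrank K s + 1) (F : (Fin 3 → K) →ₗ[K] L)
    {c : K} (hc : c ≠ 0) (hF : ∀ u v, ⁅F u, F v⁆ = c • F (u ⨯₃ v)) :
    LinearMap.range F ≤ s.toSubmodule := by
  have hW : 2 ≤ finrank K (s.toSubmodule.comap F) := by
    have hcodim := s.toSubmodule.finrank_add_finrank_le_finrank_comap_add F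
    simp only [finrank_fin_fun] at hcodim
    change _ + finrank K s ≤ _ at hcodim
    omega
  have hcross : ∀ u ∈ s.toSubmodule.comap F, ∀ v ∈ s.toSubmodule.comap F,
      u ⨯₃ v ∈ s.toSubmodule.comap F := by
    intro u hu v hv
    have hmem : c⁻¹ • ⁅F u, F v⁆ ∈ s := s.smul_mem _ (s.lie_mem hu hv)
    rwa [hF, smul_smul, inv_mul_cancel₀ hc, one_smul] at hmem
  rw [LinearMap.range_le_iff_comap, Submodule.eq_top_of_cross_mem hW hcross]

open Complex in
noncomputable def toSu2 : (Fin 3 → ℝ) →ₗ[ℝ] Matrix (Fin 2) (Fin 2) ℂ where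
  toFun v := !![v 0 * I, v 1 + v 2 * I; -v 1 + v 2 * I, -(v 0 * I)]
  map_add' u v := by
    ext i j; fin_cases i <;> fin_cases j <;> simp <;> ring
  map_smul' r v := by
    ext i j; fin_cases i <;> fin_cases j <;> simp [Complex.real_smul] <;> ring

open Complex in
theorem toSu2_apply (v : Fin 3 → ℝ) :
    toSu2 v = !![v 0 * I, v 1 + v 2 * I; -v 1 + v 2 * I, -(v 0 * I)] := rfl

theorem conjTranspose_toSu2 (v : Fin 3 → ℝ) : (toSu2 v)ᴴ = -toSu2 v := by
  ext i j; fin_cases i <;> fin_cases j <;> simp [toSu2_apply, Complex.ext_iff]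

theorem trace_toSu2 (v : Fin 3 → ℝ) : (toSu2 v).trace = 0 := by
  simp [toSu2_apply, trace_fin_two]

theorem toSu2_injective : Function.Injective toSu2 := by
  intro u v h
  have h0 : u 0 = v 0 := by simpa [toSu2_apply] using congrArg Complex.im (congrFun₂ h 0 0)
  have h1 : u 1 = v 1 := by simpa [toSu2_apply] using congrArg Complex.re (congrFun₂ h 0 1)
  have h2 : u 2 = v 2 := by simpa [toSu2_apply] using congrArg Complex.im (congrFun₂ h 0 1)
  ext i; fin_cases i
  exacts [h0, h1, h2]

theorem lie_toSu2 (u v : Fin 3 → ℝ) : ⁅toSu2 u, toSu2 v⁆ = (2 : ℝ) • toSu2 (u ⨯₃ v) := by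
  rw [Ring.lie_def]
  ext i j
  fin_cases i <;> fin_cases j <;>
    simp [toSu2_apply, cross_apply, Complex.ext_iff] <;>
    constructor <;> ring

theorem exists_toSu2_eq {A : Matrix (Fin 2) (Fin 2) ℂ} (hA : Aᴴ = -A) (htr : A.trace = 0) :
    ∃ v, toSu2 v = A := by
  refine ⟨![(A 0 0).im, (A 0 1).re, (A 0 1).im], ?_⟩
  have h00 := congrFun₂ hA 0 0
  have h10 := congrFun₂ hA 1 0
  rw [trace_fin_two] at htr
  ext i j
  fin_cases i <;> fin_cases j <;> simp [toSu2_apply, Complex.ext_iff] at htr h00 h10 ⊢ <;>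
    (try constructor) <;> linarith

theorem re_trace_eq_zero_of_conjTranspose_eq_neg {n : Type*} [Fintype n]
    {A : Matrix n n ℂ} (hA : Aᴴ = -A) : A.trace.re = 0 := by
  have h := congrArg (fun M => (trace M).re) hA
  simp only [trace_conjTranspose, trace_neg, Complex.star_def, Complex.conj_re,
    Complex.neg_re] at h
  linarith

noncomputable def leftSu2 : (Fin 3 → ℝ) →ₗ[ℝ] su2u2 :=
  LinearMap.codRestrict su2u2.toSubmodule (LinearMap.inl ℝ _ _ ∘ₗ toSu2) fun v =>
    ⟨conjTranspose_toSu2 v, by simp, by simp [trace_toSu2]⟩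

noncomputable def rightSu2 : (Fin 3 → ℝ) →ₗ[ℝ] su2u2 :=
  LinearMap.codRestrict su2u2.toSubmodule (LinearMap.inr ℝ _ _ ∘ₗ toSu2) fun v =>
    ⟨by simp, conjTranspose_toSu2 v, by simp [trace_toSu2]⟩

@[simp] theorem coe_leftSu2 (v : Fin 3 → ℝ) :
    (leftSu2 v : Matrix (Fin 2) (Fin 2) ℂ × Matrix (Fin 2) (Fin 2) ℂ) = (toSu2 v, 0) := rfl

@[simp] theorem coe_rightSu2 (v : Fin 3 → ℝ) :
    (rightSu2 v : Matrix (Fin 2) (Fin 2) ℂ × Matrix (Fin 2) (Fin 2) ℂ) = (0, toSu2 v) := rfl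

theorem lie_leftSu2 (u v : Fin 3 → ℝ) : ⁅leftSu2 u, leftSu2 v⁆ = (2 : ℝ) • leftSu2 (u ⨯₃ v) := by
  ext : 1
  simp [← lie_toSu2, Ring.lie_def]

theorem lie_rightSu2 (u v : Fin 3 → ℝ) :
    ⁅rightSu2 u, rightSu2 v⁆ = (2 : ℝ) • rightSu2 (u ⨯₃ v) := by
  ext : 1
  simp [← lie_toSu2, Ring.lie_def]

theorem coprod_leftSu2_rightSu2_injective : Function.Injective (leftSu2.coprod rightSu2) := by
  rintro ⟨u, v⟩ ⟨u', v'⟩ h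
  have h' := congrArg Subtype.val h
  simp only [LinearMap.coprod_apply, AddMemClass.coe_add, coe_leftSu2, coe_rightSu2,
    Prod.mk_add_mk, add_zero, zero_add, Prod.ext_iff] at h'
  rw [toSu2_injective h'.1, toSu2_injective h'.2]

theorem range_coprod_leftSu2_rightSu2 :
    LinearMap.range (leftSu2.coprod rightSu2) = su2su2.toSubmodule := by
  ext ⟨⟨A, B⟩, hA, hB, -⟩
  constructor
  · rintro ⟨⟨u, v⟩, h⟩
    rw [← h]
    exact ⟨by simp [trace_toSu2], by simp [trace_toSu2]⟩
  · rintro ⟨htrA, htrB⟩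
    obtain ⟨u, rfl⟩ := exists_toSu2_eq hA htrA
    obtain ⟨v, rfl⟩ := exists_toSu2_eq hB htrB
    exact ⟨(u, v), Subtype.ext (by simp)⟩

theorem finrank_su2su2 : finrank ℝ su2su2 = 6 := by
  change finrank ℝ su2su2.toSubmodule = 6
  rw [← range_coprod_leftSu2_rightSu2, LinearMap.finrank_range_of_inj
    coprod_leftSu2_rightSu2_injective]
  simp

noncomputable def imTraceFst : su2u2 →ₗ[ℝ] ℝ :=
  Complex.imLm ∘ₗ traceLinearMap (Fin 2) ℝ ℂ ∘ₗ LinearMap.fst ℝ _ _ ∘ₗ su2u2.toSubmodule.subtype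

theorem ker_imTraceFst : LinearMap.ker imTraceFst = su2su2.toSubmodule := by
  ext ⟨⟨A, B⟩, hA, -, hAB⟩
  have hre := re_trace_eq_zero_of_conjTranspose_eq_neg hA
  have hB : B.trace = -A.trace := eq_neg_of_add_eq_zero_right hAB
  change A.trace.im = 0 ↔ A.trace = 0 ∧ B.trace = 0
  simp [hB, Complex.ext_iff, hre]

theorem finrank_su2u2_le : finrank ℝ su2u2 ≤ 7 := by
  have hrange : finrank ℝ (LinearMap.range imTraceFst) ≤ 1 :=
    finrank_self ℝ ▸ Submodule.finrank_le _
  have hsum := LinearMap.finrank_range_add_finrank_ker imTraceFst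
  rw [ker_imTraceFst] at hsum
  change _ + finrank ℝ su2su2 = _ at hsum
  rw [finrank_su2su2] at hsum
  omega

/-- The only Lie subalgebra of `s(u(2)⊕u(2))` of real dimension 6 (codimension 1) is
`su(2) ⊕ su(2)`. -/
theorem su2u2_subalgebra_dim_six_eq_su2su2
    (s : LieSubalgebra ℝ su2u2) (hs : Module.finrank ℝ s = 6) : s = su2su2 := by
  have hcodim : finrank ℝ su2u2 ≤ finrank ℝ s + 1 := hs ▸ finrank_su2u2_le
  have hle : su2su2.toSubmodule ≤ s.toSubmodule := by
    rw [← range_coprod_leftSu2_rightSu2, LinearMap.range_coprod]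
    exact sup_le (s.range_le_of_finrank_le_succ hcodim leftSu2 two_ne_zero lie_leftSu2)
      (s.range_le_of_finrank_le_succ hcodim rightSu2 two_ne_zero lie_rightSu2)
  have : FiniteDimensional ℝ s.toSubmodule := .of_finrank_eq_succ hs
  exact (LieSubalgebra.toSubmodule_injective
    (Submodule.eq_of_le_of_finrank_eq hle (finrank_su2su2.trans hs.symm))).symm
end
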